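/- arXiv:1504.07227 — 4 statements merged into one kernel-verified Lean document; each statement's English description precedes it below -/
import Mathlib

section
/- With payoff π_A(T_A, T_B) = F(T_A) − c − dS if T_A < T_B, F(T_A)/2 − c − dS if T_A = T_B, and −dS if T_A > T_B (all times in {0,...,T₀}, T_B < T₀), suppose T* < T₀ satisfies c ≤ F(T*) ≤ 2c, F(T*+1) ≤ 2·F(T*), and F(T*−1) ≤ c, with F strictly increasing, dS ≥ 0. Then (T_A, T_B) = (T*+1, T*) is a Nash equilibrium: firm B cannot improve by deviating from T*, and firm A cannot improve by deviating from T*+1. -/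
/-- Payoff of a firm that decodes at time `TA` against an opponent decoding at
`TB`, with market-efficiency horizon `T₀`. -/
noncomputable def latencyPayoff (F : ℕ → ℝ) (c dS : ℝ) (T₀ TA TB : ℕ) : ℝ :=
  if TA < min TB T₀ then F TA - c - dS
  else if TA = min TB T₀ then F TA / 2 - c - dS
  else -dS

namespace latencyPayoff

variable {F : ℕ → ℝ} {c dS : ℝ} {T₀ TA TB : ℕ}

theorem of_lt (h : TA < TB) (hTB : TB ≤ T₀) :
    latencyPayoff F c dS T₀ TA TB = F TA - c - dS := by
  rw [latencyPayoff, min_eq_left hTB, if_pos h]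

theorem of_eq (hTB : TB ≤ T₀) :
    latencyPayoff F c dS T₀ TB TB = F TB / 2 - c - dS := by
  rw [latencyPayoff, min_eq_left hTB, if_neg (lt_irrefl TB), if_pos rfl]

theorem of_gt (h : TB < TA) (hTB : TB ≤ T₀) :
    latencyPayoff F c dS T₀ TA TB = -dS := by
  rw [latencyPayoff, min_eq_left hTB, if_neg (by omega), if_neg (by omega)]

theorem le_neg_of_race_unprofitable (hF : Monotone F) (hTB : TB ≤ T₀)
    (hwin : F (TB - 1) ≤ c) (htie : F TB ≤ 2 * c) (t : ℕ) :
    latencyPayoff F c dS T₀ t TB ≤ -dS := by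
  rcases lt_trichotomy t TB with h | rfl | h
  · have : F t ≤ F (TB - 1) := hF (by omega)
    rw [of_lt h hTB]
    linarith
  · rw [of_eq hTB]
    linarith
  · rw [of_gt h hTB]

theorem le_of_undercut (hF : Monotone F) (hTB : TB + 1 ≤ T₀)
    (hprofit : c ≤ F TB) (htie : F (TB + 1) ≤ 2 * F TB) (t : ℕ) :
    latencyPayoff F c dS T₀ t (TB + 1) ≤ F TB - c - dS := by
  rcases lt_trichotomy t (TB + 1) with h | rfl | h
  · have : F t ≤ F TB := hF (by omega)
    rw [of_lt h hTB]
    linarith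
  · rw [of_eq hTB]
    linarith
  · rw [of_gt h hTB]
    linarith

end latencyPayoff

theorem stmt_4_general (F : ℕ → ℝ) (c dS : ℝ) (T₀ T : ℕ)
    (hF : StrictMono F) (hT : T < T₀)
    (h1 : c ≤ F T) (h2 : F T ≤ 2 * c)
    (h3 : F (T + 1) ≤ 2 * F T) (h4 : F (T - 1) ≤ c) :
    (∀ t ≤ T₀, latencyPayoff F c dS T₀ t T ≤ latencyPayoff F c dS T₀ (T + 1) T) ∧
    (∀ t ≤ T₀, latencyPayoff F c dS T₀ t (T + 1) ≤ latencyPayoff F c dS T₀ T (T + 1)) := by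
  refine ⟨fun t _ => ?_, fun t _ => ?_⟩
  · rw [latencyPayoff.of_gt T.lt_succ_self hT.le]
    exact latencyPayoff.le_neg_of_race_unprofitable hF.monotone hT.le h4 h2 t
  · rw [latencyPayoff.of_lt T.lt_succ_self hT]
    exact latencyPayoff.le_of_undercut hF.monotone hT h1 h3 t

/-- Under the WIN conditions, `(T_A, T_B) = (T*+1, T*)` is a Nash equilibrium:
firm A cannot improve by deviating from `T*+1` and firm B cannot improve by
deviating from `T*`. -/
theorem stmt_4 (F : ℕ → ℝ) (c dS : ℝ) (T₀ T : ℕ)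
    (hF : StrictMono F) (hdS : 0 ≤ dS) (hT : T < T₀)
    (h1 : c ≤ F T) (h2 : F T ≤ 2 * c)
    (h3 : F (T + 1) ≤ 2 * F T) (h4 : F (T - 1) ≤ c) :
    (∀ t ≤ T₀, latencyPayoff F c dS T₀ t T ≤ latencyPayoff F c dS T₀ (T + 1) T) ∧
    (∀ t ≤ T₀, latencyPayoff F c dS T₀ t (T + 1) ≤ latencyPayoff F c dS T₀ T (T + 1)) :=
  stmt_4_general F c dS T₀ T hF hT h1 h2 h3 h4
end

section
/- Under the WIN conditions (c ≤ F(T*) ≤ 2c, F(T*+1) ≤ 2F(T*), F(T*−1) ≤ c) with F strictly increasing and dS ≥ 0, both (T*+1, T*) and (T*, T*+1) are Nash equilibria of the latency game, and they yield different winners (in the first, firm B acts first; in the second, firm A acts first). -/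
/-!
Against an opponent decoding at `T*`, every earlier win pays at most `F (T* - 1) - c ≤ 0` and a
tie pays `F T* / 2 - c ≤ 0`, so conceding (decoding at `T* + 1`) is a best response. Against an
opponent at `T* + 1`, winning at `T*` pays `F T* - c`, which dominates earlier wins by
monotonicity, the tie since `F (T* + 1) ≤ 2 F T*`, and losing since `c ≤ F T*`.
-/

variable {F : ℕ → ℝ} {c dS : ℝ} {T₀ : ℕ}

lemma latencyPayoff_of_lt {TA TB : ℕ} (h : TA < min TB T₀) :
    latencyPayoff F c dS T₀ TA TB = F TA - c - dS :=
  if_pos h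

lemma latencyPayoff_of_eq {TA TB : ℕ} (h : TA = min TB T₀) :
    latencyPayoff F c dS T₀ TA TB = F TA / 2 - c - dS := by
  rw [latencyPayoff, if_neg h.not_lt, if_pos h]

lemma latencyPayoff_of_gt {TA TB : ℕ} (h : min TB T₀ < TA) :
    latencyPayoff F c dS T₀ TA TB = -dS := by
  rw [latencyPayoff, if_neg h.not_gt, if_neg h.ne']

lemma latencyPayoff_le_neg_dS (hF : Monotone F) {TB : ℕ} (hTB : TB ≤ T₀)
    (hearly : F (TB - 1) ≤ c) (htie : F TB ≤ 2 * c) (t : ℕ) :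
    latencyPayoff F c dS T₀ t TB ≤ -dS := by
  rcases lt_trichotomy t TB with h | rfl | h
  · rw [latencyPayoff_of_lt (by omega)]
    linarith [hF (Nat.le_sub_one_of_lt h)]
  · rw [latencyPayoff_of_eq (min_eq_left hTB).symm]
    linarith
  · rw [latencyPayoff_of_gt (by omega)]

lemma latencyPayoff_succ_le (hF : Monotone F) {T : ℕ} (hT : T + 1 ≤ T₀)
    (hwin : c ≤ F T) (htie : F (T + 1) ≤ 2 * F T) (t : ℕ) :
    latencyPayoff F c dS T₀ t (T + 1) ≤ F T - c - dS := by
  rcases lt_trichotomy t (T + 1) with h | rfl | h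
  · rw [latencyPayoff_of_lt (by omega)]
    linarith [hF (Nat.lt_succ_iff.mp h)]
  · rw [latencyPayoff_of_eq (min_eq_left hT).symm]
    linarith
  · rw [latencyPayoff_of_gt (by omega)]
    linarith

def IsBestResponse (F : ℕ → ℝ) (c dS : ℝ) (T₀ t TB : ℕ) : Prop :=
  ∀ s ≤ T₀, latencyPayoff F c dS T₀ s TB ≤ latencyPayoff F c dS T₀ t TB

lemma isBestResponse_succ_self (hF : Monotone F) {T : ℕ} (hT : T + 1 ≤ T₀)
    (hearly : F (T - 1) ≤ c) (htie : F T ≤ 2 * c) :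
    IsBestResponse F c dS T₀ (T + 1) T := by
  intro s _
  rw [latencyPayoff_of_gt (TA := T + 1) (by omega)]
  exact latencyPayoff_le_neg_dS hF (by omega) hearly htie s

lemma isBestResponse_self_succ (hF : Monotone F) {T : ℕ} (hT : T + 1 ≤ T₀)
    (hwin : c ≤ F T) (htie : F (T + 1) ≤ 2 * F T) :
    IsBestResponse F c dS T₀ T (T + 1) := by
  intro s _
  rw [latencyPayoff_of_lt (TA := T) (by omega)]
  exact latencyPayoff_succ_le hF hT hwin htie s

theorem stmt_5_general (F : ℕ → ℝ) (c dS : ℝ) (T₀ T : ℕ)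
    (hF : StrictMono F) (hT : T + 1 ≤ T₀)
    (h1 : c ≤ F T) (h2 : F T ≤ 2 * c)
    (h3 : F (T + 1) ≤ 2 * F T) (h4 : F (T - 1) ≤ c) :
    -- `(T*+1, T*)` is a Nash equilibrium (A plays T*+1, B plays T*):
    ((∀ t ≤ T₀, latencyPayoff F c dS T₀ t T ≤ latencyPayoff F c dS T₀ (T + 1) T) ∧
     (∀ t ≤ T₀, latencyPayoff F c dS T₀ t (T + 1) ≤ latencyPayoff F c dS T₀ T (T + 1))) ∧
    -- `(T*, T*+1)` is a Nash equilibrium (A plays T*, B plays T*+1):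
    ((∀ t ≤ T₀, latencyPayoff F c dS T₀ t (T + 1) ≤ latencyPayoff F c dS T₀ T (T + 1)) ∧
     (∀ t ≤ T₀, latencyPayoff F c dS T₀ t T ≤ latencyPayoff F c dS T₀ (T + 1) T)) ∧
    -- the winners differ: the player at `T*` acts strictly before the other
    T < T + 1 ∧ (T + 1, T) ≠ (T, T + 1) := by
  have hconcede : IsBestResponse F c dS T₀ (T + 1) T :=
    isBestResponse_succ_self hF.monotone hT h4 h2
  have hwin : IsBestResponse F c dS T₀ T (T + 1) :=
    isBestResponse_self_succ hF.monotone hT h1 h3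
  exact ⟨⟨hconcede, hwin⟩, ⟨hwin, hconcede⟩, T.lt_succ_self,
    fun h => T.succ_ne_self (congrArg Prod.fst h)⟩

/-- Under the WIN conditions, both `(T*+1, T*)` and `(T*, T*+1)` are Nash
equilibria of the (symmetric) latency game, and they have different winners:
in the first profile the player at `T*` (firm B) acts strictly first, and in
the second profile the player at `T*` (firm A) acts strictly first. -/
theorem stmt_5 (F : ℕ → ℝ) (c dS : ℝ) (T₀ T : ℕ)
    (hF : StrictMono F) (hc : 0 < c) (hdS : 0 ≤ dS) (hT : T + 1 ≤ T₀)
    (h1 : c ≤ F T) (h2 : F T ≤ 2 * c)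
    (h3 : F (T + 1) ≤ 2 * F T) (h4 : F (T - 1) ≤ c) :
    -- `(T*+1, T*)` is a Nash equilibrium (A plays T*+1, B plays T*):
    ((∀ t ≤ T₀, latencyPayoff F c dS T₀ t T ≤ latencyPayoff F c dS T₀ (T + 1) T) ∧
     (∀ t ≤ T₀, latencyPayoff F c dS T₀ t (T + 1) ≤ latencyPayoff F c dS T₀ T (T + 1))) ∧
    -- `(T*, T*+1)` is a Nash equilibrium (A plays T*, B plays T*+1):
    ((∀ t ≤ T₀, latencyPayoff F c dS T₀ t (T + 1) ≤ latencyPayoff F c dS T₀ T (T + 1)) ∧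
     (∀ t ≤ T₀, latencyPayoff F c dS T₀ t T ≤ latencyPayoff F c dS T₀ (T + 1) T)) ∧
    -- the winners differ: the player at `T*` acts strictly before the other
    T < T + 1 ∧ (T + 1, T) ≠ (T, T + 1) :=
  stmt_5_general F c dS T₀ T hF hT h1 h2 h3 h4
end

section
/- Under the WIN conditions with F strictly increasing, the symmetric profile (T*, T*) is NOT a Nash equilibrium: since F(T*) ≤ 2c, a firm decoding at T* simultaneously with its opponent earns F(T*)/2 − c − dS ≤ −dS, and strict inequality F(T*) < 2c implies it strictly improves by delaying to T*+1 (earning −dS). -/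
section LatencyPayoff

variable (F : ℕ → ℝ) (c dS : ℝ) {T₀ TA TB T : ℕ}

theorem latencyPayoff_self (hT : T ≤ T₀) :
    latencyPayoff F c dS T₀ T T = F T / 2 - c - dS := by
  simp [latencyPayoff, min_eq_left hT]

theorem latencyPayoff_of_min_lt (h : min TB T₀ < TA) :
    latencyPayoff F c dS T₀ TA TB = -dS := by
  simp [latencyPayoff, h.not_gt, h.ne']

theorem latencyPayoff_succ_self : latencyPayoff F c dS T₀ (T + 1) T = -dS :=
  latencyPayoff_of_min_lt F c dS ((min_le_left T T₀).trans_lt T.lt_succ_self)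

end LatencyPayoff

theorem latencyPayoff_self_lt_succ_self {F : ℕ → ℝ} {c : ℝ} (dS : ℝ) {T₀ T : ℕ} (hT : T ≤ T₀)
    (hF : F T < 2 * c) :
    latencyPayoff F c dS T₀ T T < latencyPayoff F c dS T₀ (T + 1) T := by
  rw [latencyPayoff_self F c dS hT, latencyPayoff_succ_self]
  linarith

theorem stmt_6_general (F : ℕ → ℝ) (c dS : ℝ) (T₀ T : ℕ)
    (hT : T < T₀)
    (h2 : F T < 2 * c) :
    latencyPayoff F c dS T₀ T T ≤ -dS ∧
    latencyPayoff F c dS T₀ T T < latencyPayoff F c dS T₀ (T + 1) T ∧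
    ¬ (∀ t ≤ T₀, latencyPayoff F c dS T₀ t T ≤ latencyPayoff F c dS T₀ T T) := by
  have hdelay := latencyPayoff_self_lt_succ_self dS hT.le h2
  refine ⟨(hdelay.trans_eq (latencyPayoff_succ_self F c dS)).le, hdelay, fun hNash => ?_⟩
  exact (hNash (T + 1) hT).not_gt hdelay

/-- Under the WIN conditions with the strict inequality `F T* < 2c`, the
symmetric profile `(T*, T*)` is NOT a Nash equilibrium: a firm strictly
improves its payoff by delaying to `T*+1`, so in particular the tie payoff
`F T*/2 - c - dS` is strictly below `-dS`. -/
theorem stmt_6 (F : ℕ → ℝ) (c dS : ℝ) (T₀ T : ℕ)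
    (hF : StrictMono F) (hdS : 0 ≤ dS) (hT : T < T₀)
    (h1 : c ≤ F T) (h2 : F T < 2 * c)
    (h3 : F (T + 1) ≤ 2 * F T) (h4 : F (T - 1) ≤ c) :
    latencyPayoff F c dS T₀ T T ≤ -dS ∧
    latencyPayoff F c dS T₀ T T < latencyPayoff F c dS T₀ (T + 1) T ∧
    ¬ (∀ t ≤ T₀, latencyPayoff F c dS T₀ t T ≤ latencyPayoff F c dS T₀ T T) :=
  stmt_6_general F c dS T₀ T hT h2
end

section
/- Consider best-response dynamics T_{n+1} = BR(T_n) where BR(T) = T−1 if F(T−1) ≥ max(c, F(T)/2), BR(T) = T if F(T)/2 ≥ max(F(T−1), c), and BR(T) = T+1 if c ≥ max(F(T−1), F(T)/2), with F : ℕ → ℝ strictly increasing, F(0) < c < F(T₀), and ties in conditions broken consistently. Then starting from any T₀' ∈ {1,...,T₀}, the sequence (T_n) is eventually constant or eventually alternates between two consecutive values T* and T*+1. -/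
/-!
Each best response moves the decoding time by at most one step, and waiting longer is only a
best response below `T₀`, since it needs `F (T - 1) ≤ c < F T₀`. If the orbit ever hits a fixed
point of `BR` it is constant from then on. Otherwise every step moves by exactly one; the orbit
cannot descend forever in `ℕ`, so it rises at some point, and it cannot keep rising past `T₀`,
so a rise `T ↦ T + 1` is followed by a fall `T + 1 ↦ T`. As the dynamics is deterministic, the
orbit then alternates between `T` and `T + 1` forever.
-/

namespace NatOrbit

variable {f seq : ℕ → ℕ}

theorem eq_of_map_eq_self (hseq : ∀ n, seq (n + 1) = f (seq n)) {N : ℕ}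
    (hN : f (seq N) = seq N) : ∀ n ≥ N, seq n = seq N := by
  intro n hn
  induction n, hn using Nat.le_induction with
  | base => rfl
  | succ n _ ih => rw [hseq, ih, hN]

theorem alternates_of_two_cycle (hseq : ∀ n, seq (n + 1) = f (seq n)) {N T : ℕ}
    (hN : seq N = T) (hrise : f T = T + 1) (hfall : f (T + 1) = T) :
    ∀ n ≥ N, (seq n = T ∧ seq (n + 1) = T + 1) ∨ (seq n = T + 1 ∧ seq (n + 1) = T) := by
  intro n hn
  induction n, hn using Nat.le_induction with
  | base => exact Or.inl ⟨hN, by rw [hseq, hN, hrise]⟩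
  | succ n _ ih =>
    rcases ih with ⟨-, h⟩ | ⟨-, h⟩
    · exact Or.inr ⟨h, by rw [hseq, h, hfall]⟩
    · exact Or.inl ⟨h, by rw [hseq, h, hrise]⟩

theorem exists_rise_then_fall {B : ℕ}
    (hstep : ∀ n, seq (n + 1) = seq n + 1 ∨ seq (n + 1) + 1 = seq n)
    (hrise : ∀ n, seq (n + 1) = seq n + 1 → seq n < B) :
    ∃ n, seq (n + 1) = seq n + 1 ∧ seq (n + 2) = seq n := by
  obtain ⟨k, hk⟩ : ∃ k, seq (k + 1) = seq k + 1 := by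
    by_contra! hfall
    have hdesc : ∀ n, seq n + n = seq 0 := by
      intro n
      induction n with
      | zero => rfl
      | succ n ih => have := (hstep n).resolve_left (hfall n); omega
    have := hdesc (seq 0 + 1)
    omega
  by_contra! hno
  have hclimb : ∀ m, seq (k + m + 1) = seq (k + m) + 1 ∧ seq (k + m) = seq k + m := by
    intro m
    induction m with
    | zero => exact ⟨hk, rfl⟩
    | succ m ih =>
      have hnext : seq (k + m + 1 + 1) ≠ seq (k + m) := hno (k + m) ih.1
      rw [← add_assoc]
      rcases hstep (k + m + 1) with h | h
      · exact ⟨h, by omega⟩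
      · exact absurd (by omega) hnext
  have := hrise (k + B) (hclimb B).1
  have := (hclimb B).2
  omega

end NatOrbit

theorem bestResponse_cases {F : ℕ → ℝ} {c : ℝ} {T₀ : ℕ} {BR : ℕ → ℕ}
    (hF : StrictMono F) (h1 : c < F T₀)
    (hBR : ∀ T : ℕ,
      (BR T = T - 1 ∧ F (T - 1) ≥ max c (F T / 2)) ∨
      (BR T = T ∧ F T / 2 ≥ max (F (T - 1)) c) ∨
      (BR T = T + 1 ∧ c ≥ max (F (T - 1)) (F T / 2)))
    (T : ℕ) : BR T = T - 1 ∨ BR T = T ∨ (BR T = T + 1 ∧ T ≤ T₀) := by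
  rcases hBR T with ⟨h, -⟩ | ⟨h, -⟩ | ⟨h, hc⟩
  · exact Or.inl h
  · exact Or.inr (Or.inl h)
  · have : T - 1 < T₀ := hF.lt_iff_lt.mp ((le_max_left _ _).trans hc |>.trans_lt h1)
    exact Or.inr (Or.inr ⟨h, by omega⟩)

theorem stmt_8_general (F : ℕ → ℝ) (c : ℝ) (T₀ : ℕ) (BR : ℕ → ℕ) (seq : ℕ → ℕ)
    (hF : StrictMono F) (h1 : c < F T₀)
    (hBR : ∀ T : ℕ,
      (BR T = T - 1 ∧ F (T - 1) ≥ max c (F T / 2)) ∨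
      (BR T = T ∧ F T / 2 ≥ max (F (T - 1)) c) ∨
      (BR T = T + 1 ∧ c ≥ max (F (T - 1)) (F T / 2)))
    (hseq : ∀ n, seq (n + 1) = BR (seq n)) :
    ∃ N : ℕ,
      (∀ n ≥ N, seq n = seq N) ∨
      (∃ T : ℕ, ∀ n ≥ N,
        (seq n = T ∧ seq (n + 1) = T + 1) ∨ (seq n = T + 1 ∧ seq (n + 1) = T)) := by
  have hcases := bestResponse_cases hF h1 hBR
  by_cases hfix : ∃ N, BR (seq N) = seq N
  · obtain ⟨N, hN⟩ := hfix
    exact ⟨N, Or.inl (NatOrbit.eq_of_map_eq_self hseq hN)⟩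
  push Not at hfix
  have hstep : ∀ n, seq (n + 1) = seq n + 1 ∨ seq (n + 1) + 1 = seq n := by
    intro n
    have := hseq n
    have := hfix n
    rcases hcases (seq n) with h | h | ⟨h, -⟩ <;> omega
  have hrise : ∀ n, seq (n + 1) = seq n + 1 → seq n < T₀ + 1 := by
    intro n h
    have := hseq n
    rcases hcases (seq n) with h' | h' | ⟨-, h'⟩ <;> omega
  obtain ⟨n, hup, hdown⟩ := NatOrbit.exists_rise_then_fall hstep hrise
  refine ⟨n, Or.inr ⟨seq n, NatOrbit.alternates_of_two_cycle hseq rfl ?_ ?_⟩⟩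
  · rw [← hseq, hup]
  · rw [← hup, ← hseq, hdown]

/-- Best-response dynamics of the latency game: the sequence `seq` obtained by
iterating a best-response map `BR` (undercut by one, match, or wait one step
longer, with ties in the defining conditions broken consistently by `BR`)
starting from any point of `{1, ..., T₀}` is eventually constant or eventually
alternates between two consecutive values `T*` and `T* + 1`. -/
theorem stmt_8 (F : ℕ → ℝ) (c : ℝ) (T₀ : ℕ) (BR : ℕ → ℕ) (seq : ℕ → ℕ)
    (hF : StrictMono F) (h0 : F 0 < c) (h1 : c < F T₀)
    (hBR : ∀ T : ℕ,
      (BR T = T - 1 ∧ F (T - 1) ≥ max c (F T / 2)) ∨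
      (BR T = T ∧ F T / 2 ≥ max (F (T - 1)) c) ∨
      (BR T = T + 1 ∧ c ≥ max (F (T - 1)) (F T / 2)))
    (hseq : ∀ n, seq (n + 1) = BR (seq n))
    (hstart : 1 ≤ seq 0 ∧ seq 0 ≤ T₀) :
    ∃ N : ℕ,
      (∀ n ≥ N, seq n = seq N) ∨
      (∃ T : ℕ, ∀ n ≥ N,
        (seq n = T ∧ seq (n + 1) = T + 1) ∨ (seq n = T + 1 ∧ seq (n + 1) = T)) :=
  stmt_8_general F c T₀ BR seq hF h1 hBR hseq
end
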